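/- For every positive integer n, A(φ,1,0;n) = ∑_{k=1}^{n} S(k,n)·φ(k) equals the sum of non-overlined parts counted without multiplicity in all the overpartitions of n, where φ is Euler's totient function. -/

import Mathlib

/-- An overpartition of `n`: a pair consisting of a multiset of overlined parts (pairwise
distinct) and a multiset of non-overlined parts, all parts positive, with total sum `n`. -/
structure Overpartition (n : ℕ) where
  overlined : Multiset ℕ
  nonoverlined : Multiset ℕ
  overlined_nodup : overlined.Nodup
  overlined_pos : ∀ i ∈ overlined, 0 < i
  nonoverlined_pos : ∀ i ∈ nonoverlined, 0 < i
  parts_sum : overlined.sum + nonoverlined.sum = n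

/-- There are only finitely many overpartitions of `n`. -/
instance (n : ℕ) : Finite (Overpartition n) := by
  classical
  set big : Multiset ℕ := n • ((Multiset.range (n + 1))) with hbig
  have key : ∀ (m : Multiset ℕ), (∀ i ∈ m, 0 < i) → m.sum ≤ n → m ≤ big := by
    intro m hpos hsum
    rw [Multiset.le_iff_count]
    intro a
    rw [hbig, Multiset.count_nsmul]
    by_cases ha : a ∈ m
    · have ha1 : 0 < a := hpos a ha
      have hale : a ≤ m.sum := Multiset.le_sum_of_mem ha
      have hcard : m.card ≤ m.sum := by
        have := Multiset.card_nsmul_le_sum (s := m) (a := 1) (fun i hi => hpos i hi)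
        simpa using this
      have hcnt : m.count a ≤ m.card := Multiset.count_le_card a m
      have haa : a ∈ Multiset.range (n + 1) := Multiset.mem_range.2 (by omega)
      have h1 : Multiset.count a (Multiset.range (n + 1)) = 1 :=
        Multiset.count_eq_one_of_mem (Multiset.nodup_range _) haa
      rw [h1]
      omega
    · simp [Multiset.count_eq_zero.2 ha]
  have hinj : Function.Injective (fun o : Overpartition n =>
      ((⟨o.overlined, Multiset.mem_powerset.2
          (key _ o.overlined_pos (by have := o.parts_sum; omega))⟩,
        ⟨o.nonoverlined, Multiset.mem_powerset.2
          (key _ o.nonoverlined_pos (by have := o.parts_sum; omega))⟩) :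
        {m // m ∈ big.powerset} × {m // m ∈ big.powerset})) := by
    intro a b h
    cases a; cases b
    simp_all
  exact Finite.of_injective _ hinj

/-- `S k n`: the total number of non-overlined parts equal to `k`, counted with
multiplicity, in all the overpartitions of `n`. -/
noncomputable def S (k n : ℕ) : ℕ := ∑ᶠ o : Overpartition n, o.nonoverlined.count k

/-- `pbar n`: the number of overpartitions of `n` (`pbar 0 = 1`). -/
noncomputable def pbar (n : ℕ) : ℕ := Nat.card (Overpartition n)

/-- The multiset of all parts (overlined and non-overlined) of an overpartition. -/
def Overpartition.parts {n : ℕ} (o : Overpartition n) : Multiset ℕ :=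
  o.overlined + o.nonoverlined

/-- `Mbar k n`: the number of overpartitions of `n` in which the first (i.e. largest) part
larger than `k` appears at least `k + 1` times. -/
noncomputable def Mbar (k n : ℕ) : ℕ :=
  Nat.card {o : Overpartition n // ∃ s ∈ o.parts, k < s ∧
    (∀ t ∈ o.parts, k < t → t ≤ s) ∧ k + 1 ≤ o.parts.count s}

/-! Adding a multiset `t` of non-overlined parts is a bijection from the overpartitions of `m`
onto those of `m + t.sum` whose non-overlined parts contain `t`. With `t = {m}` this turns the
right side into `∑_{m ≤ n} m · pbar (n - m)`; with `t` equal to `j` copies of `k` it gives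
`S k n = ∑_{jk ≤ n} pbar (n - jk)`, so the left side is `∑_{jk ≤ n} φ(k) · pbar (n - jk)`.
Grouping the pairs `(k, j)` by `m = kj`, the two agree because `∑_{k ∣ m} φ(k) = m`. -/

open Finset

lemma sum_Icc_sum_divisorsAntidiagonal {M : Type*} [AddCommMonoid M] (n : ℕ)
    (f : ℕ × ℕ → M) :
    ∑ m ∈ Icc 1 n, ∑ p ∈ m.divisorsAntidiagonal, f p
      = ∑ k ∈ Icc 1 n, ∑ j ∈ Icc 1 (n / k), f (k, j) := by
  rw [← sum_biUnion]
  · apply sum_finset_product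
    rintro ⟨k, j⟩
    simp only [mem_biUnion, mem_Icc, Nat.mem_divisorsAntidiagonal]
    constructor
    · rintro ⟨_, ⟨-, hn⟩, rfl, h0⟩
      have hk : 0 < k := Nat.pos_of_ne_zero (left_ne_zero_of_mul h0)
      have hj : 0 < j := Nat.pos_of_ne_zero (right_ne_zero_of_mul h0)
      exact ⟨⟨hk, (Nat.le_mul_of_pos_right k hj).trans hn⟩, hj,
        (Nat.le_div_iff_mul_le hk).2 (mul_comm j k ▸ hn)⟩
    · rintro ⟨⟨hk, -⟩, hj, hjn⟩
      have hkj : 0 < k * j := Nat.mul_pos hk hj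
      exact ⟨k * j, ⟨hkj, mul_comm j k ▸ (Nat.le_div_iff_mul_le hk).1 hjn⟩, rfl, hkj.ne'⟩
  · intro a _ b _ hab
    exact disjoint_left.2 fun _ ha hb =>
      hab <| (Nat.mem_divisorsAntidiagonal.1 ha).1.symm.trans (Nat.mem_divisorsAntidiagonal.1 hb).1

namespace Overpartition

variable {m n : ℕ}

noncomputable instance : Fintype (Overpartition n) := Fintype.ofFinite _

@[ext]
lemma ext {a b : Overpartition n} (h₁ : a.overlined = b.overlined)
    (h₂ : a.nonoverlined = b.nonoverlined) : a = b := by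
  cases a; cases b; simp_all

lemma sum_nonoverlined_le (o : Overpartition n) : o.nonoverlined.sum ≤ n := by
  have := o.parts_sum
  omega

lemma le_of_mem_nonoverlined (o : Overpartition n) {s : ℕ} (hs : s ∈ o.nonoverlined) :
    s ≤ n :=
  (Multiset.le_sum_of_mem hs).trans o.sum_nonoverlined_le

lemma count_nonoverlined_mul_le (o : Overpartition n) (k : ℕ) :
    o.nonoverlined.count k * k ≤ n := by
  have hrep : Multiset.replicate (o.nonoverlined.count k) k ≤ o.nonoverlined :=
    Multiset.le_count_iff_replicate_le.1 le_rfl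
  obtain ⟨u, hu⟩ := Multiset.le_iff_exists_add.1 hrep
  have h := congrArg Multiset.sum hu
  rw [Multiset.sum_add, Multiset.sum_replicate, smul_eq_mul] at h
  have := o.sum_nonoverlined_le
  omega

def addNonoverlined (t : Multiset ℕ) (ht : ∀ i ∈ t, 0 < i) (o : Overpartition m) :
    Overpartition (m + t.sum) where
  overlined := o.overlined
  nonoverlined := o.nonoverlined + t
  overlined_nodup := o.overlined_nodup
  overlined_pos := o.overlined_pos
  nonoverlined_pos i hi := (Multiset.mem_add.1 hi).elim (o.nonoverlined_pos i) (ht i)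
  parts_sum := by rw [Multiset.sum_add, ← add_assoc, o.parts_sum]

def subNonoverlined (t : Multiset ℕ) (o : Overpartition (m + t.sum)) (h : t ≤ o.nonoverlined) :
    Overpartition m where
  overlined := o.overlined
  nonoverlined := o.nonoverlined - t
  overlined_nodup := o.overlined_nodup
  overlined_pos := o.overlined_pos
  nonoverlined_pos i hi :=
    o.nonoverlined_pos i (Multiset.mem_of_le (Multiset.sub_le_self _ _) hi)
  parts_sum := by
    have := o.parts_sum
    rw [← Multiset.sub_add_cancel h, Multiset.sum_add] at this
    omega

def equivLeNonoverlined (t : Multiset ℕ) (ht : ∀ i ∈ t, 0 < i) :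
    Overpartition m ≃ {o : Overpartition (m + t.sum) // t ≤ o.nonoverlined} where
  toFun o := ⟨o.addNonoverlined t ht, Multiset.le_add_left _ _⟩
  invFun o := subNonoverlined t o.1 o.2
  left_inv _ := ext rfl (add_tsub_cancel_right _ _)
  right_inv o := Subtype.ext <| ext rfl (Multiset.sub_add_cancel o.2)

lemma card_filter_le_nonoverlined (t : Multiset ℕ) (ht : ∀ i ∈ t, 0 < i) (h : t.sum ≤ n) :
    #{o : Overpartition n | t ≤ o.nonoverlined} = pbar (n - t.sum) := by
  obtain ⟨m, rfl⟩ := Nat.exists_eq_add_of_le' h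
  rw [Nat.add_sub_cancel, pbar, Nat.card_congr (equivLeNonoverlined t ht),
    Nat.card_eq_fintype_card, Fintype.card_subtype]

end Overpartition

open Overpartition

lemma S_eq_sum_pbar {k : ℕ} (hk : 0 < k) (n : ℕ) :
    S k n = ∑ j ∈ Icc 1 (n / k), pbar (n - j * k) := by
  have hcount (o : Overpartition n) : o.nonoverlined.count k
      = #{j ∈ Icc 1 (n / k) | Multiset.replicate j k ≤ o.nonoverlined} := by
    simp_rw [← Multiset.le_count_iff_replicate_le]
    have hle : o.nonoverlined.count k ≤ n / k :=
      (Nat.le_div_iff_mul_le hk).2 (o.count_nonoverlined_mul_le k)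
    have hIcc : {j ∈ Icc 1 (n / k) | j ≤ o.nonoverlined.count k}
        = Icc 1 (o.nonoverlined.count k) := by
      ext j
      simp only [mem_filter, mem_Icc]
      omega
    rw [hIcc, Nat.card_Icc, Nat.add_sub_cancel]
  rw [S, finsum_eq_sum_of_fintype]
  simp_rw [hcount, card_filter]
  rw [sum_comm]
  refine sum_congr rfl fun j hj => ?_
  have hjk : j * k ≤ n := (Nat.le_div_iff_mul_le hk).1 (mem_Icc.1 hj).2
  rw [← card_filter,
    card_filter_le_nonoverlined _ (fun i hi => Multiset.eq_of_mem_replicate hi ▸ hk)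
      (by simpa using hjk),
    Multiset.sum_replicate, smul_eq_mul]

lemma finsum_sum_toFinset_nonoverlined (n : ℕ) :
    ∑ᶠ o : Overpartition n, ∑ s ∈ o.nonoverlined.toFinset, s
      = ∑ m ∈ Icc 1 n, pbar (n - m) * m := by
  have htoFinset (o : Overpartition n) :
      o.nonoverlined.toFinset = {m ∈ Icc 1 n | m ∈ o.nonoverlined} := by
    ext m
    simp only [Multiset.mem_toFinset, mem_filter, mem_Icc, iff_and_self]
    exact fun hm => ⟨o.nonoverlined_pos m hm, o.le_of_mem_nonoverlined hm⟩
  rw [finsum_eq_sum_of_fintype]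
  simp_rw [htoFinset, sum_filter]
  rw [sum_comm]
  refine sum_congr rfl fun m hm => ?_
  obtain ⟨hm₁, hmn⟩ := mem_Icc.1 hm
  simp_rw [← sum_filter, sum_const, smul_eq_mul, ← Multiset.singleton_le]
  rw [card_filter_le_nonoverlined _ (fun i hi => Multiset.mem_singleton.1 hi ▸ hm₁)
    (by simpa using hmn), Multiset.sum_singleton]

theorem stmt9_general (n : ℕ) :
    ∑ k ∈ Finset.Icc 1 n, S k n * Nat.totient k
      = ∑ᶠ o : Overpartition n, ∑ s ∈ o.nonoverlined.toFinset, s := by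
  rw [finsum_sum_toFinset_nonoverlined]
  calc ∑ k ∈ Icc 1 n, S k n * k.totient
      = ∑ k ∈ Icc 1 n, ∑ j ∈ Icc 1 (n / k), pbar (n - k * j) * k.totient := by
        refine sum_congr rfl fun k hk => ?_
        simp_rw [S_eq_sum_pbar (mem_Icc.1 hk).1, sum_mul, mul_comm _ k]
    _ = ∑ m ∈ Icc 1 n, ∑ p ∈ m.divisorsAntidiagonal, pbar (n - p.1 * p.2) * p.1.totient :=
        (sum_Icc_sum_divisorsAntidiagonal n fun p => pbar (n - p.1 * p.2) * p.1.totient).symm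
    _ = ∑ m ∈ Icc 1 n, pbar (n - m) * m := by
        refine sum_congr rfl fun m _ => ?_
        rw [sum_congr rfl fun p hp => by rw [(Nat.mem_divisorsAntidiagonal.1 hp).1], ← mul_sum,
          Nat.sum_divisorsAntidiagonal fun i _ => i.totient, Nat.sum_totient]

theorem stmt9 (n : ℕ) (hn : 0 < n) :
    ∑ k ∈ Finset.Icc 1 n, S k n * Nat.totient k
      = ∑ᶠ o : Overpartition n, ∑ s ∈ o.nonoverlined.toFinset, s :=
  stmt9_general n
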